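/- arXiv:0907.3801 — 3 statements merged into one kernel-verified Lean document; each statement's English description precedes it below -/
import Mathlib

section
/- The chromatic number of the square of the toroidal grid satisfies χ(T_{3,3}²) = 9, χ(T_{3,5}²) = 8, and χ(T_{4,4}²) = 8. -/
open SimpleGraph

/-- The type of incidences of a graph `G`: pairs `(v, e)` where `e` is an edge of `G`
incident to the vertex `v`. -/
def Incidence {V : Type*} (G : SimpleGraph V) : Type _ :=
  {p : V × Sym2 V // p.2 ∈ G.edgeSet ∧ p.1 ∈ p.2}

/-- The graph on the incidences of `G` in which two distinct incidences `(v,e)` and `(w,f)`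
are adjacent iff `v = w`, or `e = f`, or the edge `vw` equals `e` or `f`. -/
def incidenceGraph {V : Type*} (G : SimpleGraph V) : SimpleGraph (Incidence G) where
  Adj i j := i ≠ j ∧
    (i.1.1 = j.1.1 ∨ i.1.2 = j.1.2 ∨ s(i.1.1, j.1.1) = i.1.2 ∨ s(i.1.1, j.1.1) = j.1.2)
  symm := by
    constructor
    rintro ⟨⟨v, e⟩, hi⟩ ⟨⟨w, f⟩, hj⟩ ⟨hne, h⟩
    refine ⟨fun h' => hne h'.symm, ?_⟩
    simp only at h ⊢
    rcases h with h | h | h | h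
    · exact Or.inl h.symm
    · exact Or.inr (Or.inl h.symm)
    · exact Or.inr (Or.inr (Or.inr ((Sym2.eq_swap).trans h)))
    · exact Or.inr (Or.inr (Or.inl ((Sym2.eq_swap).trans h)))
  loopless := ⟨fun i h => h.1 rfl⟩

/-- The incidence chromatic number of a graph: the least number of colors in a proper
coloring of its incidences. -/
noncomputable def incidenceChromaticNumber {V : Type*} (G : SimpleGraph V) : ℕ∞ :=
  (incidenceGraph G).chromaticNumber

/-- The square of a graph `G`: distinct vertices are adjacent iff they are at distance
at most 2 in `G`. -/
def SimpleGraph.square {V : Type*} (G : SimpleGraph V) : SimpleGraph V where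
  Adj u v := u ≠ v ∧ (G.Adj u v ∨ ∃ w, G.Adj u w ∧ G.Adj w v)
  symm := by
    constructor
    rintro u v ⟨hne, h | ⟨w, h1, h2⟩⟩
    · exact ⟨hne.symm, Or.inl h.symm⟩
    · exact ⟨hne.symm, Or.inr ⟨w, h2.symm, h1.symm⟩⟩
  loopless := ⟨fun v h => h.1 rfl⟩

/-- The toroidal grid `T_{m,n} = C_m □ C_n`. -/
def toroidalGrid (m n : ℕ) : SimpleGraph (Fin m × Fin n) :=
  SimpleGraph.boxProd (SimpleGraph.cycleGraph m) (SimpleGraph.cycleGraph n)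


/-!
`T_{3,3}` has diameter 2, so its square is the complete graph `K_9`. In the squares of `T_{3,5}`
and `T_{4,4}` every three vertices contain two at distance at most 2, so a colour class has at
most two vertices and at least `⌈15/2⌉ = ⌈16/2⌉ = 8` colours are needed; explicit 8-colourings
show that 8 suffice.
-/

namespace SimpleGraph

variable {V α : Type*} {G : SimpleGraph V}

instance [Fintype V] [DecidableEq V] [DecidableRel G.Adj] : DecidableRel G.square.Adj :=
  fun u v => inferInstanceAs (Decidable (u ≠ v ∧ (G.Adj u v ∨ ∃ w, G.Adj u w ∧ G.Adj w v)))

instance {W : Type*} {H : SimpleGraph W} [DecidableEq V] [DecidableEq W] [DecidableRel G.Adj]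
    [DecidableRel H.Adj] : DecidableRel (G □ H).Adj :=
  fun _ _ => decidable_of_iff' _ boxProd_adj

theorem Coloring.card_le_mul_card_of_indepSetFree [Fintype V] [Fintype α] (C : G.Coloring α)
    {n : ℕ} (h : G.IndepSetFree (n + 1)) : Fintype.card V ≤ n * Fintype.card α := by
  classical
  refine Finset.card_le_mul_card_image_of_maps_to (fun v _ => Finset.mem_univ (C v)) n ?_
  intro c _
  by_contra! hlarge
  obtain ⟨s, hs, hcard⟩ := Finset.exists_subset_card_eq (Nat.succ_le_of_lt hlarge)
  refine h s ⟨(C.isIndepSet_colorClass c).mono fun v hv => ?_, hcard⟩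
  exact (Finset.mem_filter.mp (hs hv)).2

theorem not_colorable_of_indepSetFree [Fintype V] {n k : ℕ} (h : G.IndepSetFree (n + 1))
    (hcard : n * k < Fintype.card V) : ¬ G.Colorable k := by
  rintro ⟨C⟩
  have := C.card_le_mul_card_of_indepSetFree h
  rw [Fintype.card_fin] at this
  omega

theorem indepSetFree_three_of_forall_adj
    (h : ∀ u v w, u ≠ v → u ≠ w → v ≠ w → G.Adj u v ∨ G.Adj u w ∨ G.Adj v w) :
    G.IndepSetFree 3 := by
  classical
  intro s hs
  rw [← isNClique_compl, is3Clique_iff] at hs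
  obtain ⟨u, v, w, huv, huw, hvw, -⟩ := hs
  rw [compl_adj] at huv huw hvw
  rcases h u v w huv.1 huw.1 hvw.1 with hadj | hadj | hadj
  exacts [huv.2 hadj, huw.2 hadj, hvw.2 hadj]

end SimpleGraph

instance (m n : ℕ) : DecidableRel (toroidalGrid m n).Adj :=
  inferInstanceAs (DecidableRel (cycleGraph m □ cycleGraph n).Adj)

theorem toroidalGrid_three_three_square_eq_top : (toroidalGrid 3 3).square = ⊤ := by
  ext u v
  rw [top_adj]
  revert u v
  decide

theorem toroidalGrid_three_five_square_indepSetFree : (toroidalGrid 3 5).square.IndepSetFree 3 :=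
  indepSetFree_three_of_forall_adj (by decide)

theorem toroidalGrid_four_four_square_indepSetFree : (toroidalGrid 4 4).square.IndepSetFree 3 :=
  indepSetFree_three_of_forall_adj (by decide)

theorem toroidalGrid_three_five_square_colorable : (toroidalGrid 3 5).square.Colorable 8 :=
  .intro <| Coloring.mk
    (fun p => ![![0, 1, 2, 3, 4], ![2, 3, 0, 5, 6], ![5, 4, 6, 1, 7]] p.1 p.2) (by decide)

theorem toroidalGrid_four_four_square_colorable : (toroidalGrid 4 4).square.Colorable 8 :=
  .intro <| Coloring.mk
    (fun p => ![![0, 1, 2, 3], ![2, 3, 0, 1], ![4, 5, 6, 7], ![6, 7, 4, 5]] p.1 p.2) (by decide)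

theorem chromaticNumber_toroidalGrid_three_three_square :
    (toroidalGrid 3 3).square.chromaticNumber = 9 := by
  rw [toroidalGrid_three_three_square_eq_top, chromaticNumber_top]
  rfl

theorem chromaticNumber_toroidalGrid_three_five_square :
    (toroidalGrid 3 5).square.chromaticNumber = 8 :=
  chromaticNumber_eq_iff_colorable_not_colorable (n := 7) |>.mpr
    ⟨toroidalGrid_three_five_square_colorable,
      not_colorable_of_indepSetFree toroidalGrid_three_five_square_indepSetFree (by decide)⟩

theorem chromaticNumber_toroidalGrid_four_four_square :
    (toroidalGrid 4 4).square.chromaticNumber = 8 :=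
  chromaticNumber_eq_iff_colorable_not_colorable (n := 7) |>.mpr
    ⟨toroidalGrid_four_four_square_colorable,
      not_colorable_of_indepSetFree toroidalGrid_four_four_square_indepSetFree (by decide)⟩

theorem chromatic_square_toroidal_grid_exceptions :
    (toroidalGrid 3 3).square.chromaticNumber = 9 ∧
    (toroidalGrid 3 5).square.chromaticNumber = 8 ∧
    (toroidalGrid 4 4).square.chromaticNumber = 8 :=
  ⟨chromaticNumber_toroidalGrid_three_three_square,
    chromaticNumber_toroidalGrid_three_five_square,
    chromaticNumber_toroidalGrid_four_four_square⟩
end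

section
/- For all integers m, n ≥ 3, the chromatic number of the square of the toroidal grid satisfies χ(T_{m,n}²) = 5 if and only if m ≡ 0 (mod 5) and n ≡ 0 (mod 5). -/
/-!
The closed neighbourhood of a vertex of `T_{m,n}` is a 5-clique of its square, so `χ ≥ 5`, and
when `5 ∣ m` and `5 ∣ n` the colouring `(i, j) ↦ i + 2j (mod 5)` is proper. Conversely, a
5-colouring of the square lifts to an `(m, n)`-periodic colouring of `ℤ²` in which points at
`ℓ¹`-distance at most 2 differ. There every plus-shaped neighbourhood is rainbow, which forces the
colour class of the origin to be one of the lattices `{u ≡ 2v}` or `{u ≡ -2v} (mod 5)`; since it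
contains `(m, 0)` and `(0, n)`, both `m` and `n` are multiples of 5.
-/

open SimpleGraph

theorem Int.induction_on₂ {P : ℤ → ℤ → Prop} (a b : ℤ) (zero : P 0 0)
    (step : ∀ a b, P a b → P (a + 1) b ∧ P (a - 1) b ∧ P a (b + 1) ∧ P a (b - 1)) :
    P a b := by
  have row : ∀ a, P a 0 := fun a => by
    induction a using Int.induction_on with
    | zero => exact zero
    | succ a ih => exact (step _ _ ih).1
    | pred a ih => exact (step _ _ ih).2.1
  induction b using Int.induction_on with
  | zero => exact row a
  | succ b ih => exact (step _ _ ih).2.2.1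
  | pred b ih => exact (step _ _ ih).2.2.2

theorem Int.eq_of_natAbs_add_natAbs_le_one {a b : ℤ} (h : a.natAbs + b.natAbs ≤ 1) :
    a = 0 ∧ b = 0 ∨ a = 1 ∧ b = 0 ∨ a = -1 ∧ b = 0 ∨ a = 0 ∧ b = 1 ∨ a = 0 ∧ b = -1 := by
  omega

/-- A proper colouring of the square of the grid `ℤ □ ℤ`: points at `ℓ¹`-distance 1 or 2 get
different colours. -/
def IsDistTwoColoring {α : Type*} (f : ℤ → ℤ → α) : Prop :=
  ∀ x y x' y', f x y = f x' y' → x = x' ∧ y = y' ∨ 3 ≤ (x - x').natAbs + (y - y').natAbs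

def plusOffset : Fin 5 → ℤ × ℤ := ![(0, 0), (1, 0), (-1, 0), (0, 1), (0, -1)]

theorem natAbs_plusOffset_le (k : Fin 5) :
    (plusOffset k).1.natAbs + (plusOffset k).2.natAbs ≤ 1 := by
  revert k
  decide

namespace IsDistTwoColoring

section
variable {α : Type*} {f : ℤ → ℤ → α}

theorem flip (hf : IsDistTwoColoring f) : IsDistTwoColoring (flip f) := fun x y x' y' h => by
  have := hf y x y' x' h
  omega

theorem translate (hf : IsDistTwoColoring f) (x y : ℤ) :
    IsDistTwoColoring fun a b => f (x + a) (y + b) := fun a b a' b' h => by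
  have := hf _ _ _ _ h
  omega

theorem injective_plus (hf : IsDistTwoColoring f) (x y : ℤ) :
    Function.Injective fun k => f (x + (plusOffset k).1) (y + (plusOffset k).2) := by
  intro k l hkl
  have := hf _ _ _ _ hkl
  have := natAbs_plusOffset_le k
  have := natAbs_plusOffset_le l
  exact (by decide : Function.Injective plusOffset) (Prod.ext (by omega) (by omega))

end

variable {f : ℤ → ℤ → Fin 5}

theorem exists_near_eq (hf : IsDistTwoColoring f) (x y : ℤ) (c : Fin 5) :
    ∃ a b : ℤ, a.natAbs + b.natAbs ≤ 1 ∧ f (x + a) (y + b) = c := by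
  obtain ⟨k, hk⟩ := Finite.surjective_of_injective (hf.injective_plus x y) c
  exact ⟨_, _, natAbs_plusOffset_le k, hk⟩

theorem knight_dichotomy (hf : IsDistTwoColoring f) : f 2 1 = f 0 0 ∨ f 1 2 = f 0 0 := by
  obtain ⟨a, b, hab, hc⟩ := hf.exists_near_eq 1 1 (f 0 0)
  have := hf _ _ _ _ hc
  rcases (by omega : a = 1 ∧ b = 0 ∨ a = 0 ∧ b = 1) with ⟨rfl, rfl⟩ | ⟨rfl, rfl⟩
  · exact Or.inl hc
  · exact Or.inr hc

/-- For a unit vector `u = (s, t)` and its quarter turn `u⊥ = (-t, s)`, the knight move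
`2u + u⊥` is `(2s - t, s + 2t)`. The colour of the origin reappears in the plus centred at `2u⊥`,
but not at `3u⊥`: then the plus centred at `u + 2u⊥` would miss it. -/
theorem knight_rotate (hf : IsDistTwoColoring f) {s t : ℤ} (hst : s.natAbs + t.natAbs = 1)
    (h : f (2 * s - t) (s + 2 * t) = f 0 0) : f (2 * -t - s) (-t + 2 * s) = f 0 0 := by
  obtain ⟨a, b, hab, hc⟩ := hf.exists_near_eq (-2 * t) (2 * s) (f 0 0)
  have h1 := hf _ _ _ _ hc
  have h2 := hf _ _ _ _ (hc.trans h.symm)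
  obtain ⟨rfl, rfl⟩ | ⟨rfl, hb⟩ : a = -s ∧ b = -t ∨ a = -t ∧ b = s := by
    rcases Int.eq_of_natAbs_add_natAbs_le_one hst.le with
      ⟨rfl, rfl⟩ | ⟨rfl, rfl⟩ | ⟨rfl, rfl⟩ | ⟨rfl, rfl⟩ | ⟨rfl, rfl⟩ <;> omega
  · convert hc using 2 <;> ring
  · subst b
    obtain ⟨a', b', hab', hc'⟩ := hf.exists_near_eq (-2 * t + s) (2 * s + t) (f 0 0)
    have := hf _ _ _ _ hc'
    have := hf _ _ _ _ (hc'.trans h.symm)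
    have := hf _ _ _ _ (hc'.trans hc.symm)
    clear h1 h2 hab
    rcases Int.eq_of_natAbs_add_natAbs_le_one hst.le with
      ⟨rfl, rfl⟩ | ⟨rfl, rfl⟩ | ⟨rfl, rfl⟩ | ⟨rfl, rfl⟩ | ⟨rfl, rfl⟩ <;>
    rcases Int.eq_of_natAbs_add_natAbs_le_one hab' with
      ⟨rfl, rfl⟩ | ⟨rfl, rfl⟩ | ⟨rfl, rfl⟩ | ⟨rfl, rfl⟩ | ⟨rfl, rfl⟩ <;> omega

theorem knight_eq_knight (hf : IsDistTwoColoring f) {x y s t s' t' : ℤ}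
    (hst : s.natAbs + t.natAbs = 1) (hst' : s'.natAbs + t'.natAbs = 1)
    (h : f (x + (2 * s - t)) (y + (s + 2 * t)) = f x y) :
    f (x + (2 * s' - t')) (y + (s' + 2 * t')) = f x y := by
  have hg := hf.translate x y
  have h0 : f (x + (2 * s - t)) (y + (s + 2 * t)) = f (x + 0) (y + 0) := by
    simpa only [add_zero] using h
  have h1 := hg.knight_rotate hst h0
  have h2 := hg.knight_rotate (by omega) h1
  have h3 := hg.knight_rotate (by omega) h2
  rw [add_zero, add_zero] at h1 h2 h3
  rcases (by omega : s' = s ∧ t' = t ∨ s' = -t ∧ t' = s ∨ s' = -s ∧ t' = -t ∨ s' = t ∧ t' = -s)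
    with ⟨rfl, rfl⟩ | ⟨rfl, rfl⟩ | ⟨rfl, rfl⟩ | ⟨rfl, rfl⟩
  · exact h
  · exact h1
  · exact h2
  · simpa only [neg_neg] using h3

theorem knight_step (hf : IsDistTwoColoring f) {x y s t x' y' : ℤ} (h : f (x + 2) (y + 1) = f x y)
    (hst : s.natAbs + t.natAbs = 1) (hx : x' = x + (2 * s - t)) (hy : y' = y + (s + 2 * t)) :
    f x' y' = f x y ∧ f (x' + 2) (y' + 1) = f x' y' := by
  have hv : f x' y' = f x y := by
    subst hx hy
    exact hf.knight_eq_knight (s := 1) (t := 0) (by norm_num) hst h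
  refine ⟨hv, ?_⟩
  have hback : f (x' + (2 * -s - -t)) (y' + (-s + 2 * -t)) = f x' y' := by
    rw [hv]
    congr 1 <;> omega
  simpa using hf.knight_eq_knight (s' := 1) (t' := 0) (by omega) (by norm_num) hback

/-- `{(u, v) | 5 ∣ u - 2v}` is the lattice spanned by the knight moves `(2, 1)` and `(-1, 2)`. -/
theorem eq_of_five_dvd (hf : IsDistTwoColoring f) (h : f 2 1 = f 0 0) {u v : ℤ}
    (huv : 5 ∣ u - 2 * v) : f u v = f 0 0 := by
  have lattice : ∀ a b : ℤ, f (2 * a - b) (a + 2 * b) = f 0 0 ∧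
      f (2 * a - b + 2) (a + 2 * b + 1) = f (2 * a - b) (a + 2 * b) := by
    intro a b
    induction a, b using Int.induction_on₂ with
    | zero => simpa using h
    | step a b ih =>
      have move : ∀ s t a' b' : ℤ, s.natAbs + t.natAbs = 1 → a' = a + s → b' = b + t →
          f (2 * a' - b') (a' + 2 * b') = f 0 0 ∧
          f (2 * a' - b' + 2) (a' + 2 * b' + 1) = f (2 * a' - b') (a' + 2 * b') := by
        rintro s t a' b' hst rfl rfl
        obtain ⟨h1, h2⟩ := hf.knight_step (x' := 2 * (a + s) - (b + t)) (y' := a + s + 2 * (b + t))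
          ih.2 hst (by ring) (by ring)
        exact ⟨h1.trans ih.1, h2⟩
      exact ⟨move 1 0 _ _ (by norm_num) rfl (by ring), move (-1) 0 _ _ (by norm_num) (by ring)
        (by ring), move 0 1 _ _ (by norm_num) (by ring) rfl, move 0 (-1) _ _ (by norm_num)
        (by ring) (by ring)⟩
  obtain ⟨k, hk⟩ := huv
  have := (lattice (2 * k + v) (-k)).1
  rwa [show 2 * (2 * k + v) - -k = u by omega, show 2 * k + v + 2 * -k = v by ring] at this

theorem eq_iff_five_dvd (hf : IsDistTwoColoring f) (h : f 2 1 = f 0 0) (u v : ℤ) :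
    f u v = f 0 0 ↔ 5 ∣ u - 2 * v := by
  refine ⟨fun huv => ?_, hf.eq_of_five_dvd h⟩
  by_contra hdvd
  -- the lattice meets the plus around `(u, v)` outside its centre
  rcases (by omega : 5 ∣ u + 1 - 2 * v ∨ 5 ∣ u - 1 - 2 * v ∨ 5 ∣ u - 2 * (v + 1) ∨
      5 ∣ u - 2 * (v - 1)) with h' | h' | h' | h' <;>
  · have := hf _ _ _ _ ((hf.eq_of_five_dvd h h').trans huv.symm)
    omega

theorem five_dvd_of_eq_of_eq (hf : IsDistTwoColoring f) {m n : ℤ} (hm : f m 0 = f 0 0)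
    (hn : f 0 n = f 0 0) : 5 ∣ m ∧ 5 ∣ n := by
  rcases hf.knight_dichotomy with h | h
  · have := (hf.eq_iff_five_dvd h m 0).1 hm
    have := (hf.eq_iff_five_dvd h 0 n).1 hn
    omega
  · have := (hf.flip.eq_iff_five_dvd h 0 m).1 hm
    have := (hf.flip.eq_iff_five_dvd h n 0).1 hn
    omega

end IsDistTwoColoring

section Torus

open Fin.CommRing

variable {m n : ℕ} [NeZero m] [NeZero n]

theorem Fin.intCast_eq_intCast_iff_dvd_sub {a b : ℤ} : (a : Fin m) = b ↔ (m : ℤ) ∣ b - a := by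
  rw [← (ZMod.finEquiv m).injective.eq_iff, map_intCast, map_intCast,
    ZMod.intCast_eq_intCast_iff_dvd_sub]

theorem cycleGraph_adj_iff_of_two_le (hm : 2 ≤ m) {u v : Fin m} :
    (cycleGraph m).Adj u v ↔ u - v = 1 ∨ v - u = 1 := by
  obtain ⟨k, rfl⟩ : ∃ k, m = k + 2 := ⟨m - 2, by omega⟩
  exact cycleGraph_adj

theorem toroidalGrid_adj_iff (hm : 2 ≤ m) (hn : 2 ≤ n) {u v : Fin m × Fin n} :
    (toroidalGrid m n).Adj u v ↔
      u - v ∈ ({(1, 0), (-1, 0), (0, 1), (0, -1)} : Set (Fin m × Fin n)) := by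
  rw [toroidalGrid, boxProd_adj, cycleGraph_adj_iff_of_two_le hm, cycleGraph_adj_iff_of_two_le hn]
  simp only [Set.mem_insert_iff, Set.mem_singleton_iff, Prod.ext_iff, Prod.fst_sub, Prod.snd_sub,
    sub_eq_zero, ← neg_sub v.1 u.1, ← neg_sub v.2 u.2, neg_eq_iff_eq_neg, neg_zero, neg_neg,
    @eq_comm _ u.1, @eq_comm _ u.2]
  tauto

theorem toroidalGrid_adj_intCast (hm : 2 ≤ m) (hn : 2 ≤ n) {x y x' y' : ℤ}
    (h : (x - x').natAbs + (y - y').natAbs = 1) :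
    (toroidalGrid m n).Adj ((x : Fin m), (y : Fin n)) ((x' : Fin m), (y' : Fin n)) := by
  rw [toroidalGrid_adj_iff hm hn, Prod.mk_sub_mk, ← Int.cast_sub, ← Int.cast_sub]
  rcases Int.eq_of_natAbs_add_natAbs_le_one h.le with
    ⟨h1, h2⟩ | ⟨h1, h2⟩ | ⟨h1, h2⟩ | ⟨h1, h2⟩ | ⟨h1, h2⟩ <;> simp_all

theorem toroidalGrid_square_adj_intCast (hm : 3 ≤ m) (hn : 3 ≤ n) {x y x' y' : ℤ}
    (hne : x ≠ x' ∨ y ≠ y') (h : (x - x').natAbs + (y - y').natAbs ≤ 2) :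
    (toroidalGrid m n).square.Adj ((x : Fin m), (y : Fin n)) ((x' : Fin m), (y' : Fin n)) := by
  refine ⟨fun heq => ?_, ?_⟩
  · rw [Prod.ext_iff, Fin.intCast_eq_intCast_iff_dvd_sub, Fin.intCast_eq_intCast_iff_dvd_sub] at heq
    have hx := Int.eq_zero_of_dvd_of_natAbs_lt_natAbs heq.1 (by omega)
    have hy := Int.eq_zero_of_dvd_of_natAbs_lt_natAbs heq.2 (by omega)
    omega
  rcases (by omega : (x - x').natAbs + (y - y').natAbs = 1 ∨ (x - x').natAbs + (y - y').natAbs = 2)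
    with h1 | h2
  · exact Or.inl (toroidalGrid_adj_intCast (by omega) (by omega) h1)
  · obtain ⟨a, b, ha, hb⟩ : ∃ a b : ℤ, (x - a).natAbs + (y - b).natAbs = 1 ∧
        (a - x').natAbs + (b - y').natAbs = 1 := by
      by_cases hx : x = x'
      · exact ⟨x, (y + y') / 2, by omega⟩
      by_cases hy : y = y'
      · exact ⟨(x + x') / 2, y, by omega⟩
      exact ⟨x', y, by omega⟩
    exact Or.inr ⟨((a : Fin m), (b : Fin n)), toroidalGrid_adj_intCast (by omega) (by omega) ha,
      toroidalGrid_adj_intCast (by omega) (by omega) hb⟩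

theorem isDistTwoColoring_intCast {α : Type*} (hm : 3 ≤ m) (hn : 3 ≤ n)
    (C : (toroidalGrid m n).square.Coloring α) :
    IsDistTwoColoring fun x y : ℤ => C ((x : Fin m), (y : Fin n)) := by
  intro x y x' y' h
  by_contra hfar
  exact C.valid (toroidalGrid_square_adj_intCast hm hn (by omega) (by omega)) h

theorem toroidalGrid_square_not_colorable_four (hm : 3 ≤ m) (hn : 3 ≤ n) :
    ¬ (toroidalGrid m n).square.Colorable 4 := by
  rintro ⟨C⟩
  simpa using
    Fintype.card_le_of_injective _ ((isDistTwoColoring_intCast hm hn C).injective_plus 0 0)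

theorem five_dvd_of_toroidalGrid_square_colorable_five (hm : 3 ≤ m) (hn : 3 ≤ n)
    (h : (toroidalGrid m n).square.Colorable 5) : 5 ∣ m ∧ 5 ∣ n := by
  obtain ⟨C⟩ := h
  have := (isDistTwoColoring_intCast hm hn C).five_dvd_of_eq_of_eq (m := m) (n := n)
    (by simp) (by simp)
  exact_mod_cast this

def Fin.castHomZMod {d : ℕ} (h : d ∣ m) : Fin m →+* ZMod d :=
  (ZMod.castHom h (ZMod d)).comp (ZMod.finEquiv m).toRingHom

/-- The colouring `(i, j) ↦ i + 2j (mod 5)`, well defined when `5 ∣ m` and `5 ∣ n`. -/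
def torusColoring (h5m : 5 ∣ m) (h5n : 5 ∣ n) : Fin m × Fin n →+ ZMod 5 :=
  (Fin.castHomZMod h5m).toAddMonoidHom.coprod (2 • (Fin.castHomZMod h5n).toAddMonoidHom)

theorem torusColoring_ne_of_adj (hm : 2 ≤ m) (hn : 2 ≤ n) (h5m : 5 ∣ m) (h5n : 5 ∣ n)
    {u v : Fin m × Fin n} (huv : (toroidalGrid m n).square.Adj u v) :
    torusColoring h5m h5n u ≠ torusColoring h5m h5n v := by
  rw [Ne, ← sub_eq_zero, ← map_sub]
  obtain ⟨hne, hadj | ⟨w, huw, hwv⟩⟩ := huv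
  · rw [toroidalGrid_adj_iff hm hn] at hadj
    rcases hadj with h | h | h | h <;> rw [h] <;> simp [torusColoring] <;> decide
  · rw [toroidalGrid_adj_iff hm hn] at huw hwv
    have hne' : (u - w) + (w - v) ≠ 0 := by rwa [sub_add_sub_cancel, sub_ne_zero]
    rw [← sub_add_sub_cancel u w v, map_add]
    rcases huw with h1 | h1 | h1 | h1 <;> rcases hwv with h2 | h2 | h2 | h2 <;>
      rw [h1, h2] at hne' ⊢ <;> simp [torusColoring] at hne' ⊢ <;> decide

theorem toroidalGrid_square_colorable_five (hm : 2 ≤ m) (hn : 2 ≤ n) (h5m : 5 ∣ m) (h5n : 5 ∣ n) :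
    (toroidalGrid m n).square.Colorable 5 := by
  simpa using (Coloring.mk _ fun huv => torusColoring_ne_of_adj hm hn h5m h5n huv).colorable

end Torus

theorem chromatic_square_toroidal_grid_eq_five_iff (m n : ℕ) (hm : 3 ≤ m) (hn : 3 ≤ n) :
    (toroidalGrid m n).square.chromaticNumber = 5 ↔ (m % 5 = 0 ∧ n % 5 = 0) := by
  have : NeZero m := ⟨by omega⟩
  have : NeZero n := ⟨by omega⟩
  rw [show (5 : ℕ∞) = (4 : ℕ) + 1 from rfl, chromaticNumber_eq_iff_colorable_not_colorable,
    ← Nat.dvd_iff_mod_eq_zero, ← Nat.dvd_iff_mod_eq_zero]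
  exact ⟨fun h => five_dvd_of_toroidalGrid_square_colorable_five hm hn h.1,
    fun ⟨h5m, h5n⟩ => ⟨toroidalGrid_square_colorable_five (by omega) (by omega) h5m h5n,
      toroidalGrid_square_not_colorable_four hm hn⟩⟩
end

section
/- If G is a finite regular graph of degree Δ(G) ≥ 1, then the incidence chromatic number satisfies χ_i(G) = Δ(G) + 1 if and only if the chromatic number of the square satisfies χ(G²) = Δ(G) + 1. -/
open SimpleGraph

/-!
At a vertex `v` of a `d`-regular graph the `d` incidences `(v, e)` get `d` distinct colors, and
every incidence `(w, wv)` pointing at `v` is adjacent to all of them. With `d + 1` colors, all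
incidences pointing at `v` therefore share the one remaining color, and giving it to `v` colors
`G²` properly. Conversely, coloring `(v, vw)` by the color of `w` in `G²` is an incidence coloring.
Both numbers are at least `d + 1`: a closed neighbourhood is a clique of `G²`, and the incidences
at `v` together with one incidence pointing at `v` form a clique of the incidence graph.
-/

namespace Incidence

variable {V : Type*} {G : SimpleGraph V}

def ofAdj {v w : V} (h : G.Adj v w) : Incidence G :=
  ⟨(v, s(v, w)), G.mem_edgeSet.mpr h, Sym2.mem_mk_left v w⟩

noncomputable def other (i : Incidence G) : V :=
  Sym2.Mem.other i.2.2

theorem other_ofAdj {v w : V} (h : G.Adj v w) : (ofAdj h).other = w :=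
  Sym2.congr_right.mp (Sym2.other_spec _)

theorem exists_eq_ofAdj (i : Incidence G) : ∃ (v w : V) (h : G.Adj v w), i = ofAdj h := by
  obtain ⟨⟨v, e⟩, he, hv⟩ := i
  obtain ⟨w, rfl⟩ : ∃ w, e = s(v, w) := ⟨_, (Sym2.other_spec hv).symm⟩
  exact ⟨v, w, he, rfl⟩

theorem ofAdj_inj {v w u : V} (hw : G.Adj v w) (hu : G.Adj v u) : ofAdj hw = ofAdj hu ↔ w = u :=
  ⟨fun h => Sym2.congr_right.mp (congrArg (fun i : Incidence G => i.1.2) h), by rintro rfl; rfl⟩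

theorem adj_ofAdj_ofAdj_of_ne {v w u : V} (hw : G.Adj v w) (hu : G.Adj v u) (hwu : w ≠ u) :
    (incidenceGraph G).Adj (ofAdj hw) (ofAdj hu) :=
  ⟨(ofAdj_inj hw hu).not.mpr hwu, Or.inl rfl⟩

theorem adj_ofAdj_ofAdj {v w u : V} (hvw : G.Adj v w) (hwu : G.Adj w u) :
    (incidenceGraph G).Adj (ofAdj hvw) (ofAdj hwu) :=
  ⟨fun h => hvw.ne (congrArg (fun i : Incidence G => i.1.1) h), Or.inr (Or.inr (Or.inl rfl))⟩

noncomputable def toSquare : incidenceGraph G →g G.square where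
  toFun := other
  map_rel' {i j} := by
    obtain ⟨v, w, h, rfl⟩ := exists_eq_ofAdj i
    obtain ⟨v', w', h', rfl⟩ := exists_eq_ofAdj j
    rintro ⟨hne, hcase⟩
    change v = v' ∨ s(v, w) = s(v', w') ∨ s(v, v') = s(v, w) ∨ s(v, v') = s(v', w') at hcase
    rw [other_ofAdj, other_ofAdj]
    rcases hcase with rfl | hedge | hedge | hedge
    · have hww' : w ≠ w' := fun hww' => hne ((ofAdj_inj h h').mpr hww')
      exact ⟨hww', Or.inr ⟨v, h.symm, h'⟩⟩
    · rcases Sym2.eq_iff.mp hedge with ⟨rfl, rfl⟩ | ⟨rfl, rfl⟩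
      · exact absurd rfl hne
      · exact ⟨h.ne', Or.inl h.symm⟩
    · obtain rfl := Sym2.congr_right.mp hedge
      exact ⟨h'.ne, Or.inl h'⟩
    · obtain rfl := Sym2.congr_right.mp (Sym2.eq_swap.trans hedge)
      exact ⟨h.ne', Or.inl h.symm⟩

end Incidence

open Incidence

section

variable {V : Type*} {G : SimpleGraph V}

theorem incidenceChromaticNumber_le_chromaticNumber_square :
    incidenceChromaticNumber G ≤ G.square.chromaticNumber :=
  chromaticNumber_mono_of_hom toSquare

variable [G.LocallyFinite]

theorem color_ofAdj_eq_of_card_le_degree_add_one {α : Type*} [Fintype α]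
    (φ : (incidenceGraph G).Coloring α) {v w u : V} (hv : Fintype.card α ≤ G.degree v + 1)
    (hw : G.Adj w v) (hu : G.Adj u v) : φ (ofAdj hw) = φ (ofAdj hu) := by
  classical
  set S := Finset.univ.image fun x : G.neighborSet v => φ (ofAdj x.2)
  have hS : S.card = G.degree v := by
    rw [Finset.card_image_of_injective, Finset.card_univ, card_neighborSet_eq_degree]
    intro x y hxy
    by_contra hne
    exact φ.valid (adj_ofAdj_ofAdj_of_ne x.2 y.2 (Subtype.coe_injective.ne hne)) hxy
  have hnotMem : ∀ {x : V} (hx : G.Adj x v), φ (ofAdj hx) ∉ S := by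
    simp only [S, Finset.mem_image]
    rintro x hx ⟨y, -, hy⟩
    exact φ.valid (adj_ofAdj_ofAdj hx y.2) hy.symm
  have hcompl : Sᶜ.card ≤ 1 := by
    rw [Finset.card_compl]
    omega
  exact Finset.card_le_one.mp hcompl _ (Finset.mem_compl.mpr (hnotMem hw)) _
    (Finset.mem_compl.mpr (hnotMem hu))

theorem square_colorable_of_incidenceGraph_colorable {d : ℕ} (hreg : G.IsRegularOfDegree d)
    (h : (incidenceGraph G).Colorable (d + 1)) : G.square.Colorable (d + 1) := by
  classical
  obtain ⟨φ⟩ := h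
  let c : V → Fin (d + 1) := fun v =>
    if h : ∃ w, G.Adj w v then φ (ofAdj h.choose_spec) else 0
  have hc : ∀ {w v : V} (h : G.Adj w v), c v = φ (ofAdj h) := fun {w v} h => by
    simp only [c, dif_pos (⟨w, h⟩ : ∃ w, G.Adj w v)]
    exact color_ofAdj_eq_of_card_le_degree_add_one φ (by simp [hreg v]) _ h
  refine ⟨Coloring.mk c ?_⟩
  rintro u v ⟨huv, hadj | ⟨m, hum, hmv⟩⟩
  · rw [hc hadj.symm, hc hadj]
    exact φ.valid (adj_ofAdj_ofAdj hadj.symm hadj)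
  · rw [hc hum.symm, hc hmv]
    exact φ.valid (adj_ofAdj_ofAdj_of_ne hum.symm hmv huv)

theorem degree_add_one_le_chromaticNumber_square (v : V) :
    (G.degree v + 1 : ℕ∞) ≤ G.square.chromaticNumber := by
  classical
  have hclique : G.square.IsClique (insert v (G.neighborFinset v) : Finset V) := by
    rw [Finset.coe_insert, isClique_insert]
    refine ⟨fun x hx y hy hxy => ⟨hxy, Or.inr ⟨v, ?_, ?_⟩⟩, fun x hx hvx => ⟨hvx, Or.inl ?_⟩⟩
    all_goals simp_all [G.adj_comm]
  have hcard := hclique.card_le_chromaticNumber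
  rwa [Finset.card_insert_of_notMem (G.notMem_neighborFinset_self v),
    card_neighborFinset_eq_degree, Nat.cast_add_one] at hcard

theorem degree_add_one_le_incidenceChromaticNumber {v w : V} (h : G.Adj v w) :
    (G.degree v + 1 : ℕ∞) ≤ incidenceChromaticNumber G := by
  classical
  set S := Finset.univ.image fun x : G.neighborSet v => ofAdj x.2
  have hinj : Function.Injective fun x : G.neighborSet v => ofAdj x.2 :=
    fun x y hxy => Subtype.ext ((ofAdj_inj x.2 y.2).mp hxy)
  have hnotMem : ofAdj h.symm ∉ S := by
    simp only [S, Finset.mem_image]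
    rintro ⟨x, -, hx⟩
    exact h.ne (congrArg (fun i : Incidence G => i.1.1) hx)
  have hclique : (incidenceGraph G).IsClique (insert (ofAdj h.symm) S : Finset (Incidence G)) := by
    rw [Finset.coe_insert, isClique_insert]
    simp only [S, Finset.coe_image, Finset.coe_univ, Set.image_univ, Set.forall_mem_range]
    refine ⟨?_, fun x _ => adj_ofAdj_ofAdj h.symm x.2⟩
    rintro _ ⟨x, rfl⟩ _ ⟨y, rfl⟩ hxy
    exact adj_ofAdj_ofAdj_of_ne x.2 y.2 fun h => hxy (by simp [Subtype.ext h])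
  have hcard := hclique.card_le_chromaticNumber
  rwa [Finset.card_insert_of_notMem hnotMem, Finset.card_image_of_injective _ hinj,
    Finset.card_univ, card_neighborSet_eq_degree, Nat.cast_add_one] at hcard

end

theorem incidence_chromatic_eq_iff_chromatic_square_eq_of_regular {V : Type*} [Fintype V]
    (G : SimpleGraph V) [DecidableRel G.Adj]
    (hreg : G.IsRegularOfDegree G.maxDegree) (hd : 1 ≤ G.maxDegree) :
    incidenceChromaticNumber G = (G.maxDegree : ℕ∞) + 1 ↔
      G.square.chromaticNumber = (G.maxDegree : ℕ∞) + 1 := by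
  obtain ⟨v, w, hvw⟩ := (ne_bot_iff_exists_adj (G := G)).mp fun h => by
    simp [G.maxDegree_eq_zero_iff.mpr h] at hd
  have hsquare := degree_add_one_le_chromaticNumber_square (G := G) v
  have hincidence := degree_add_one_le_incidenceChromaticNumber hvw
  rw [hreg v] at hsquare hincidence
  constructor
  · intro h
    have hcol : (incidenceGraph G).Colorable (G.maxDegree + 1) := by
      rw [← chromaticNumber_le_iff_colorable, Nat.cast_add_one]
      exact h.le
    refine le_antisymm ?_ hsquare
    simpa using (square_colorable_of_incidenceGraph_colorable hreg hcol).chromaticNumber_le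
  · intro h
    exact le_antisymm (h ▸ incidenceChromaticNumber_le_chromaticNumber_square) hincidence
end
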